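/- arXiv:0901.2291 — 3 statements merged into one kernel-verified Lean document; each statement's English description precedes it below -/
import Mathlib

section
/- Let H be a countable pure subgroup of the Baer-Specker group ℤ^ω that is dense in the product topology on ℤ^ω (where ℤ carries the discrete topology). Then the quotient group ℤ^ω/H is isomorphic to ℤ^ω/ℤ^(ω). -/
/-!
Write `H` as the union of an increasing chain of subgroups `F k`, each mapped isomorphically
onto `ℤ^(N k)` by truncation to the first `N k` coordinates. To absorb a new element `a ∈ H` into
a stage `F`, let `B` be the saturation of `F + ℤ a`; it lies in `H` by purity and has finite rank.
For large `N`, truncation is injective on `B` with pure image. Purity of the image is checked one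
prime `p` at a time: if `E ≠ 0` kills the torsion of `ℤ^N₀` modulo the image of `B` at a level
`N₀` where truncation is injective on `B`, every `p ∤ E` is already handled at `N₀`, and each of
the finitely many `p ∣ E` by a finite-dimensionality argument over `ZMod p`. Density then lifts a
complement of the image into `H`.

Lifting the standard basis vectors stage by stage gives `b s ∈ H` with `b s s = 1` and
`b s m = 0` for `m < s`. Then `t ↦ ∑ s, t s • b s` is a triangular, hence invertible,
endomorphism of `ℤ^ω` mapping `ℤ^(ω)` onto the span of the `b s`, which is `H`.
-/

/-- The subgroup `ℤ^(ω)` of finitely supported functions in the Baer-Specker group `ℤ^ω`. -/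
def finSuppSubgroup : AddSubgroup (ℕ → ℤ) where
  carrier := {x | (Function.support x).Finite}
  zero_mem' := by simp
  add_mem' := by
    intro a b ha hb
    exact Set.Finite.subset (ha.union hb) (Function.support_add a b)
  neg_mem' := by
    intro a ha
    simpa [Function.support_neg] using ha

open Submodule

def truncate (R : Type*) [Semiring R] (N : ℕ) : (ℕ → R) →ₗ[R] (Fin N → R) :=
  LinearMap.funLeft R R Fin.val

@[simp] lemma truncate_apply {R : Type*} [Semiring R] (N : ℕ) (x : ℕ → R) (i : Fin N) :
    truncate R N x i = x i := rfl

lemma truncate_eq_zero_iff {R : Type*} [Semiring R] {N : ℕ} {x : ℕ → R} :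
    truncate R N x = 0 ↔ ∀ m < N, x m = 0 :=
  ⟨fun h m hm => congrFun h ⟨m, hm⟩, fun h => funext fun i => h i i.2⟩

lemma ker_truncate_antitone (R : Type*) [Semiring R] :
    Antitone fun N => LinearMap.ker (truncate R N) := fun _ _ hNM _ hx =>
  truncate_eq_zero_iff.2 fun m hm => truncate_eq_zero_iff.1 hx m (hm.trans_le hNM)

lemma Dense.map_truncate_eq_top {R : Type*} [Ring R] [TopologicalSpace R] [DiscreteTopology R]
    {H : Submodule R (ℕ → R)} (hH : Dense (H : Set (ℕ → R))) (N : ℕ) :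
    H.map (truncate R N) = ⊤ := by
  refine eq_top_iff.2 fun z _ => ?_
  let z' : ℕ → R := fun m => if h : m < N then z ⟨m, h⟩ else 0
  obtain ⟨x, hx, hxz⟩ := hH.exists_mem_open
    (isOpen_set_pi (Set.finite_Iio N) fun _ _ => isOpen_discrete _)
    (⟨z', fun m _ => rfl⟩ : (Set.pi (Set.Iio N) fun m => {z' m}).Nonempty)
  exact ⟨x, hx, funext fun i => by simpa [z'] using hxz i i.2⟩

lemma exists_disjoint_ker_truncate {R : Type*} [Ring R] (W : Submodule R (ℕ → R))
    [IsArtinian R W] : ∃ N, Disjoint W (LinearMap.ker (truncate R N)) := by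
  let f : ℕ →o (Submodule R W)ᵒᵈ :=
    ⟨fun N => (LinearMap.ker (truncate R N)).comap W.subtype,
      fun _ _ hNM => comap_mono (ker_truncate_antitone R hNM)⟩
  obtain ⟨N, hN⟩ := IsArtinian.monotone_stabilizes f
  refine ⟨N, LinearMap.disjoint_ker.2 fun w hw hwN => funext fun m => ?_⟩
  have hw' : (⟨w, hw⟩ : W) ∈ OrderDual.ofDual (f (max N (m + 1))) := by
    rw [← hN _ (le_max_left _ _)]; exact hwN
  exact truncate_eq_zero_iff.1 hw' m (by omega)

lemma exists_forall_intCast_eq_zero {G : Submodule ℤ (ℕ → ℤ)} (hG : G.FG)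
    (K : Type*) [Field K] :
    ∃ N, ∀ x ∈ G, (∀ m < N, (x m : K) = 0) → ∀ m, (x m : K) = 0 := by
  obtain ⟨s, rfl⟩ := hG
  let castPi : (ℕ → ℤ) →ₗ[ℤ] (ℕ → K) := (Int.castRingHom K).toIntLinearMap.compLeft ℕ
  let W := span K (castPi '' s)
  have : FiniteDimensional K W := FiniteDimensional.span_of_finite K (s.finite_toSet.image _)
  obtain ⟨N, hN⟩ := exists_disjoint_ker_truncate W
  refine ⟨N, fun x hx hxN => congrFun (LinearMap.disjoint_ker.1 hN (castPi x) ?_ ?_)⟩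
  · have := mem_map_of_mem (f := castPi) hx
    rw [map_span] at this
    exact span_le_restrictScalars ℤ K _ this
  · exact truncate_eq_zero_iff.2 hxN

section Saturation

variable {M : Type*} [AddCommGroup M]

def saturation (G : Submodule ℤ M) : Submodule ℤ M :=
  (torsion ℤ (M ⧸ G)).comap G.mkQ

lemma mem_saturation {G : Submodule ℤ M} {x : M} :
    x ∈ saturation G ↔ ∃ c : ℤ, c ≠ 0 ∧ c • x ∈ G := by
  simp [saturation, ← Submodule.Quotient.mk_smul, mem_nonZeroDivisors_iff_ne_zero]

def IsSaturated (Λ : Submodule ℤ M) : Prop :=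
  ∀ ⦃c : ℤ⦄ ⦃x : M⦄, c ≠ 0 → c • x ∈ Λ → x ∈ Λ

lemma IsSaturated.of_prime {Λ : Submodule ℤ M}
    (h : ∀ p : ℕ, p.Prime → ∀ x : M, (p : ℤ) • x ∈ Λ → x ∈ Λ) : IsSaturated Λ := by
  have hnat : ∀ n : ℕ, n ≠ 0 → ∀ x : M, (n : ℤ) • x ∈ Λ → x ∈ Λ := by
    intro n
    induction n using induction_on_primes with
    | zero => exact fun h0 => absurd rfl h0
    | one => simp
    | prime_mul p a hp ih =>
      intro hpa x hx
      refine ih (right_ne_zero_of_mul hpa) x (h p hp _ ?_)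
      rwa [smul_smul, ← Nat.cast_mul]
  intro c x hc hx
  refine hnat c.natAbs (Int.natAbs_ne_zero.2 hc) x ?_
  rcases Int.natAbs_eq c with h | h
  · rwa [← h]
  · rw [← neg_eq_iff_eq_neg.2 h, neg_smul]; exact Λ.neg_mem hx

lemma isSaturated_of_pure [IsAddTorsionFree M] {H : AddSubgroup M}
    (hpure : ∀ n : ℕ, 0 < n → ∀ h ∈ H, (∃ g : M, n • g = h) → ∃ k ∈ H, n • k = h) :
    IsSaturated H.toIntSubmodule := by
  refine IsSaturated.of_prime fun p hp x hx => ?_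
  obtain ⟨k, hk, hkx⟩ := hpure p hp.pos _ hx ⟨x, (natCast_zsmul _ _).symm⟩
  rwa [← IsAddTorsionFree.nsmul_right_injective hp.ne_zero (hkx.trans (natCast_zsmul _ _))]

lemma le_saturation (G : Submodule ℤ M) : G ≤ saturation G :=
  fun x hx => mem_saturation.2 ⟨1, one_ne_zero, by simpa using hx⟩

lemma isSaturated_saturation (G : Submodule ℤ M) : IsSaturated (saturation G) := by
  intro c x hc hx
  obtain ⟨d, hd, hdx⟩ := mem_saturation.1 hx
  exact mem_saturation.2 ⟨d * c, mul_ne_zero hd hc, by rwa [mul_smul]⟩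

lemma IsSaturated.saturation_le {G H : Submodule ℤ M} (hH : IsSaturated H) (hGH : G ≤ H) :
    saturation G ≤ H := fun _ hx =>
  let ⟨_, hc, hcx⟩ := mem_saturation.1 hx
  hH hc (hGH hcx)

lemma IsSaturated.isTorsionFree_quotient {Λ : Submodule ℤ M} (hΛ : IsSaturated Λ) :
    Module.IsTorsionFree ℤ (M ⧸ Λ) := by
  refine Module.isTorsionFree_iff_smul_eq_zero.2 fun c q hcq => ?_
  obtain ⟨x, rfl⟩ := Λ.mkQ_surjective q
  rw [or_iff_not_imp_left]
  intro hc
  rw [← map_smul, mkQ_apply, Quotient.mk_eq_zero] at hcq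
  exact (Quotient.mk_eq_zero Λ).2 (hΛ hc hcq)

lemma exists_smul_mem_of_mem_saturation [Module.Finite ℤ M] (Λ : Submodule ℤ M) :
    ∃ E : ℤ, E ≠ 0 ∧ ∀ y ∈ saturation Λ, E • y ∈ Λ := by
  obtain ⟨E, hEann, hE⟩ :=
    annihilator_top_inter_nonZeroDivisors (torsion_isTorsion (R := ℤ) (M := M ⧸ Λ))
  refine ⟨E, mem_nonZeroDivisors_iff_ne_zero.1 hE, fun y hy => ?_⟩
  have := mem_annihilator.1 hEann ⟨Λ.mkQ y, hy⟩ mem_top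
  rw [← Quotient.mk_eq_zero, Quotient.mk_smul]
  exact congrArg Subtype.val this

end Saturation

section Truncation

variable {B : Submodule ℤ (ℕ → ℤ)}

lemma fg_of_disjoint_ker_truncate {N : ℕ} (hB : Disjoint B (LinearMap.ker (truncate ℤ N))) :
    B.FG :=
  fg_of_fg_map_of_fg_inf_ker (truncate ℤ N) (IsNoetherian.noetherian _)
    (by rw [disjoint_iff.1 hB]; exact fg_bot)

lemma exists_disjoint_saturation_ker_truncate {G : Submodule ℤ (ℕ → ℤ)} (hG : G.FG) :
    ∃ N, Disjoint (saturation G) (LinearMap.ker (truncate ℤ N)) := by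
  obtain ⟨N, hN⟩ := exists_forall_intCast_eq_zero hG ℚ
  refine ⟨N, LinearMap.disjoint_ker.2 fun x hx hxN => ?_⟩
  obtain ⟨c, hc, hcx⟩ := mem_saturation.1 hx
  have hcx0 : ∀ m, ((c * x m : ℤ) : ℚ) = 0 := hN _ hcx fun m hm => by
    simp [truncate_eq_zero_iff.1 hxN m hm]
  funext m
  simpa [hc] using hcx0 m

lemma isSaturated_map_truncate (hB : IsSaturated B) {N : ℕ}
    (hdvd : ∀ p : ℕ, p.Prime → ∀ b ∈ B, (∀ m < N, (p : ℤ) ∣ b m) → ∀ m, (p : ℤ) ∣ b m) :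
    IsSaturated (B.map (truncate ℤ N)) := by
  refine IsSaturated.of_prime fun p hp y ⟨b, hb, hby⟩ => ?_
  have hp0 : (p : ℤ) ≠ 0 := by exact_mod_cast hp.ne_zero
  have hbp : (p : ℤ) • (fun m => b m / p) = b := funext fun m =>
    Int.mul_ediv_cancel' (hdvd p hp b hb (fun m hm => ⟨y ⟨m, hm⟩, congrFun hby ⟨m, hm⟩⟩) m)
  refine ⟨_, hB hp0 (hbp ▸ hb), smul_right_injective _ hp0 ?_⟩
  simp only [← map_smul, hbp, hby]

lemma dvd_of_forall_lt_dvd_of_not_dvd {N : ℕ} (hB : Disjoint B (LinearMap.ker (truncate ℤ N)))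
    {E : ℤ} (hE : ∀ y ∈ saturation (B.map (truncate ℤ N)), E • y ∈ B.map (truncate ℤ N))
    {p : ℕ} (hp : p.Prime) (hpE : ¬ (p : ℤ) ∣ E) {b : ℕ → ℤ} (hb : b ∈ B)
    (hdvd : ∀ m < N, (p : ℤ) ∣ b m) (m : ℕ) : (p : ℤ) ∣ b m := by
  have hp0 : (p : ℤ) ≠ 0 := by exact_mod_cast hp.ne_zero
  set y : Fin N → ℤ := fun i => b i / p
  have hpy : (p : ℤ) • y = truncate ℤ N b :=
    funext fun i => Int.mul_ediv_cancel' (hdvd i i.2)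
  obtain ⟨b', hb', hb'y⟩ := hE y (mem_saturation.2 ⟨p, hp0, hpy ▸ mem_map_of_mem hb⟩)
  have hb'b : (p : ℤ) • b' = E • b := by
    refine sub_eq_zero.1 (LinearMap.disjoint_ker.1 hB _
      (B.sub_mem (B.smul_mem _ hb') (B.smul_mem _ hb)) ?_)
    rw [map_sub, map_smul, map_smul, hb'y, ← hpy, smul_comm, sub_self]
  have : (p : ℤ) ∣ E * b m := ⟨b' m, (congrFun hb'b m).symm⟩
  exact ((Nat.prime_iff_prime_int.1 hp).dvd_or_dvd this).resolve_left hpE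

lemma exists_isSaturated_map_truncate (hB : IsSaturated B) {N₀ : ℕ}
    (hB₀ : Disjoint B (LinearMap.ker (truncate ℤ N₀))) (n : ℕ) :
    ∃ N, n ≤ N ∧ Disjoint B (LinearMap.ker (truncate ℤ N)) ∧
      IsSaturated (B.map (truncate ℤ N)) := by
  have hBfg := fg_of_disjoint_ker_truncate hB₀
  obtain ⟨E, hE0, hE⟩ := exists_smul_mem_of_mem_saturation (B.map (truncate ℤ N₀))
  have hNp : ∀ p : ℕ, ∃ Np, p.Prime →
      ∀ b ∈ B, (∀ m < Np, (p : ℤ) ∣ b m) → ∀ m, (p : ℤ) ∣ b m := by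
    intro p
    by_cases hp : p.Prime
    · have : Fact p.Prime := ⟨hp⟩
      obtain ⟨Np, hNp⟩ := exists_forall_intCast_eq_zero hBfg (ZMod p)
      simp only [ZMod.intCast_zmod_eq_zero_iff_dvd] at hNp
      exact ⟨Np, fun _ => hNp⟩
    · exact ⟨0, fun h => absurd h hp⟩
  choose Np hNp using hNp
  refine ⟨n ⊔ N₀ ⊔ E.natAbs.primeFactors.sup Np, by omega,
    hB₀.mono_right (ker_truncate_antitone ℤ (by omega)),
    isSaturated_map_truncate hB fun p hp b hb hdvd => ?_⟩
  by_cases hpE : (p : ℤ) ∣ E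
  · have : Np p ≤ E.natAbs.primeFactors.sup Np := Finset.le_sup
      (Nat.mem_primeFactors.2 ⟨hp, Int.natCast_dvd.1 hpE, Int.natAbs_ne_zero.2 hE0⟩)
    exact hNp p hp b hb fun m hm => hdvd m (by omega)
  · exact dvd_of_forall_lt_dvd_of_not_dvd hB₀ hE hp hpE hb fun m hm => hdvd m (by omega)

end Truncation

def TruncatesIsomorphically (F : Submodule ℤ (ℕ → ℤ)) (N : ℕ) : Prop :=
  Disjoint F (LinearMap.ker (truncate ℤ N)) ∧ F.map (truncate ℤ N) = ⊤

lemma exists_truncatesIsomorphically_of_isSaturated {B H : Submodule ℤ (ℕ → ℤ)} {N : ℕ}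
    (hB : Disjoint B (LinearMap.ker (truncate ℤ N))) (hsat : IsSaturated (B.map (truncate ℤ N)))
    (hBH : B ≤ H) (hH : H.map (truncate ℤ N) = ⊤) :
    ∃ F, B ≤ F ∧ F ≤ H ∧ TruncatesIsomorphically F N := by
  set Λ := B.map (truncate ℤ N)
  have := hsat.isTorsionFree_quotient
  let f : H →ₗ[ℤ] (Fin N → ℤ) ⧸ Λ := Λ.mkQ ∘ₗ truncate ℤ N ∘ₗ H.subtype
  have hf : Function.Surjective f := by
    intro q
    obtain ⟨z, rfl⟩ := Λ.mkQ_surjective q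
    obtain ⟨x, hx, hxz⟩ := mem_map.1 (hH ▸ mem_top : z ∈ H.map (truncate ℤ N))
    exact ⟨⟨x, hx⟩, by simp [f, hxz]⟩
  -- `(Fin N → ℤ) ⧸ Λ` is finitely generated and torsion-free, hence projective: `f` splits.
  obtain ⟨ψ, hψ⟩ := Module.projective_lifting_property f LinearMap.id hf
  let L := H.subtype ∘ₗ ψ
  have hL : ∀ q, Λ.mkQ (truncate ℤ N (L q)) = q := LinearMap.congr_fun hψ
  refine ⟨B ⊔ LinearMap.range L, le_sup_left, sup_le hBH ?_, ?_, ?_⟩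
  · rintro _ ⟨q, rfl⟩
    exact (ψ q).2
  · refine LinearMap.disjoint_ker.2 fun x hx hx0 => ?_
    obtain ⟨g, hg, _, ⟨q, rfl⟩, rfl⟩ := mem_sup.1 hx
    have hq := congrArg Λ.mkQ hx0
    rw [map_add, map_add, hL, map_zero, mkQ_apply,
      (Quotient.mk_eq_zero Λ).2 (mem_map_of_mem hg), zero_add] at hq
    subst hq
    rw [map_zero, add_zero] at hx0 ⊢
    exact LinearMap.disjoint_ker.1 hB g hg hx0
  · refine eq_top_iff.2 fun z _ => ?_
    obtain ⟨g, hg, hgz⟩ : z - truncate ℤ N (L (Λ.mkQ z)) ∈ Λ :=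
      (Submodule.Quotient.eq Λ).1 (hL _).symm
    exact ⟨g + L (Λ.mkQ z), add_mem (mem_sup_left hg) (mem_sup_right ⟨_, rfl⟩),
      by rw [map_add, hgz, sub_add_cancel]⟩

lemma exists_truncatesIsomorphically_extension {H F : Submodule ℤ (ℕ → ℤ)} (hH : IsSaturated H)
    (hdense : ∀ N, H.map (truncate ℤ N) = ⊤) {N : ℕ} (hF : TruncatesIsomorphically F N)
    (hFH : F ≤ H) {a : ℕ → ℤ} (ha : a ∈ H) :
    ∃ N' F', N < N' ∧ F ≤ F' ∧ a ∈ F' ∧ F' ≤ H ∧ TruncatesIsomorphically F' N' := by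
  set G := F ⊔ span ℤ {a}
  have hGH : G ≤ H := sup_le hFH (span_le.2 (Set.singleton_subset_iff.2 ha))
  have hG : G.FG := (fg_of_disjoint_ker_truncate hF.1).sup (fg_span_singleton a)
  set B := saturation G
  have hGB : G ≤ B := le_saturation G
  obtain ⟨N₀, hN₀⟩ := exists_disjoint_saturation_ker_truncate hG
  obtain ⟨N', hNN', hN'inj, hN'sat⟩ :=
    exists_isSaturated_map_truncate (isSaturated_saturation G) hN₀ (N + 1)
  obtain ⟨F', hBF', hF'H, hF'⟩ := exists_truncatesIsomorphically_of_isSaturated hN'inj hN'sat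
    (hH.saturation_le hGH) (hdense N')
  exact ⟨N', F', hNN', le_sup_left.trans (hGB.trans hBF'),
    hBF' (hGB (mem_sup_right (mem_span_singleton_self a))), hF'H, hF'⟩

section Triangular

variable {R : Type*} [CommRing R] (b : ℕ → ℕ → R)

-- The formal sum `∑ s, t s • b s`, keeping in coordinate `m` only the terms `s ≤ m`, which are
-- all the nonzero ones when `b s m = 0` for `m < s`.
def triangularMap : (ℕ → R) →ₗ[R] (ℕ → R) where
  toFun t m := ∑ s ∈ Finset.range (m + 1), t s * b s m
  map_add' _ _ := funext fun _ => by simp [add_mul, Finset.sum_add_distrib]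
  map_smul' _ _ := funext fun _ => by simp [Finset.mul_sum, mul_assoc]

def triangularSolve (x : ℕ → R) (m : ℕ) : R :=
  x m - ∑ s : Fin m, triangularSolve x s * b s m
termination_by m
decreasing_by exact s.isLt

variable {b}

lemma triangularMap_triangularSolve (hb1 : ∀ s, b s s = 1) (x : ℕ → R) :
    triangularMap b (triangularSolve b x) = x := funext fun m => by
  rw [triangularMap, LinearMap.coe_mk, AddHom.coe_mk, Finset.sum_range_succ, hb1, mul_one,
    triangularSolve.eq_def b x m,
    ← Fin.sum_univ_eq_sum_range (fun s => triangularSolve b x s * b s m)]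
  ring

lemma triangularMap_injective (hb1 : ∀ s, b s s = 1) : Function.Injective (triangularMap b) := by
  refine (injective_iff_map_eq_zero _).2 fun t ht => funext fun m => ?_
  induction m using Nat.strong_induction_on with
  | _ m ih =>
    have := congrFun ht m
    rwa [triangularMap, LinearMap.coe_mk, AddHom.coe_mk, Finset.sum_range_succ, hb1, mul_one,
      Finset.sum_eq_zero fun s hs => by rw [ih s (Finset.mem_range.1 hs), Pi.zero_apply, zero_mul],
      zero_add] at this

noncomputable def triangularEquiv (hb1 : ∀ s, b s s = 1) : (ℕ → R) ≃ₗ[R] (ℕ → R) :=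
  LinearEquiv.ofBijective (triangularMap b)
    ⟨triangularMap_injective hb1, fun x => ⟨_, triangularMap_triangularSolve hb1 x⟩⟩

variable (hb0 : ∀ s m, m < s → b s m = 0)
include hb0

lemma triangularMap_apply_of_lt (t : ℕ → R) {m n : ℕ} (hmn : m < n) :
    triangularMap b t m = ∑ s ∈ Finset.range n, t s * b s m :=
  Finset.sum_subset (Finset.range_subset_range.2 hmn) fun s _ hs => by
    rw [hb0 s m (by simpa using hs), mul_zero]

lemma triangularMap_eq_sum {t : ℕ → R} {n : ℕ} (ht : ∀ s, n ≤ s → t s = 0) :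
    triangularMap b t = ∑ s ∈ Finset.range n, t s • b s := funext fun m => by
  rw [triangularMap_apply_of_lt hb0 t (lt_max_of_lt_right (Nat.lt_succ_self m)),
    Finset.sum_apply]
  refine (Finset.sum_subset (Finset.range_subset_range.2 (le_max_left n (m + 1)))
    fun s _ hs => ?_).symm
  rw [ht s (by simpa using hs), zero_mul]

lemma mem_span_range_of_disjoint_ker_truncate (hb1 : ∀ s, b s s = 1) {F : Submodule R (ℕ → R)}
    {n : ℕ} (hF : Disjoint F (LinearMap.ker (truncate R n))) (hbF : ∀ s < n, b s ∈ F)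
    {x : ℕ → R} (hx : x ∈ F) : x ∈ span R (Set.range b) := by
  set y := ∑ s ∈ Finset.range n, triangularSolve b x s • b s
  have hyF : y ∈ F := sum_mem fun s hs => F.smul_mem _ (hbF s (Finset.mem_range.1 hs))
  have hyx : y = x := by
    refine sub_eq_zero.1 (LinearMap.disjoint_ker.1 hF _ (F.sub_mem hyF hx) ?_)
    rw [map_sub, sub_eq_zero]
    funext i
    simp only [truncate_apply, y, Finset.sum_apply, Pi.smul_apply, smul_eq_mul]
    rw [← triangularMap_apply_of_lt hb0 _ i.2, triangularMap_triangularSolve hb1]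
  exact hyx ▸ sum_mem fun s _ => smul_mem _ _ (subset_span ⟨s, rfl⟩)

end Triangular

lemma mem_finSuppSubgroup {x : ℕ → ℤ} : x ∈ finSuppSubgroup ↔ (Function.support x).Finite :=
  Iff.rfl

lemma map_triangularEquiv_finSuppSubgroup {b : ℕ → ℕ → ℤ} (hb0 : ∀ s m, m < s → b s m = 0)
    (hb1 : ∀ s, b s s = 1) :
    AddSubgroup.map ((triangularEquiv hb1).toAddEquiv : (ℕ → ℤ) →+ (ℕ → ℤ)) finSuppSubgroup =
      (span ℤ (Set.range b)).toAddSubgroup := by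
  apply le_antisymm
  · rintro _ ⟨t, ht, rfl⟩
    obtain ⟨n, hn⟩ := mem_finSuppSubgroup.1 ht |>.bddAbove
    have htn : ∀ s, n + 1 ≤ s → t s = 0 := fun s hs =>
      Function.notMem_support.1 fun h => absurd (hn h) (by omega)
    change triangularMap b t ∈ span ℤ (Set.range b)
    rw [triangularMap_eq_sum hb0 htn]
    exact sum_mem fun s _ => smul_mem _ _ (subset_span ⟨s, rfl⟩)
  · rw [span_int_eq_addSubgroupClosure, AddSubgroup.closure_le]
    rintro _ ⟨s, rfl⟩
    refine ⟨Pi.single s 1, mem_finSuppSubgroup.2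
      ((Set.finite_singleton s).subset Pi.support_single_subset), ?_⟩
    change triangularMap b (Pi.single s 1) = b s
    rw [triangularMap_eq_sum hb0 (n := s + 1) fun s' hs' => Pi.single_eq_of_ne (by omega) _]
    simp [Pi.single_apply]

lemma exists_chain_truncatesIsomorphically {H : Submodule ℤ (ℕ → ℤ)} (hH : IsSaturated H)
    (hdense : ∀ N, H.map (truncate ℤ N) = ⊤) (a : ℕ → ℕ → ℤ) (ha : ∀ k, a k ∈ H) :
    ∃ (N : ℕ → ℕ) (F : ℕ → Submodule ℤ (ℕ → ℤ)), StrictMono N ∧ Monotone F ∧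
      (∀ k, F k ≤ H) ∧ (∀ k, a k ∈ F (k + 1)) ∧ ∀ k, TruncatesIsomorphically (F k) (N k) := by
  let T := {p : ℕ × Submodule ℤ (ℕ → ℤ) // p.2 ≤ H ∧ TruncatesIsomorphically p.2 p.1}
  have step : ∀ (t : T) (k : ℕ), ∃ t' : T, t.1.1 < t'.1.1 ∧ t.1.2 ≤ t'.1.2 ∧ a k ∈ t'.1.2 := by
    rintro ⟨⟨N, F⟩, hFH, hF⟩ k
    obtain ⟨N', F', hN, hF', haF', hF'H, hF'iso⟩ :=
      exists_truncatesIsomorphically_extension hH hdense hF hFH (ha k)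
    exact ⟨⟨(N', F'), hF'H, hF'iso⟩, hN, hF', haF'⟩
  choose next hnextN hnextF hnexta using step
  let base : T := ⟨(0, ⊥), bot_le, disjoint_bot_left, Subsingleton.elim _ _⟩
  let t : ℕ → T := fun k => Nat.rec base (fun k t => next t k) k
  exact ⟨fun k => (t k).1.1, fun k => (t k).1.2,
    strictMono_nat_of_lt_succ fun k => hnextN (t k) k,
    monotone_nat_of_le_succ fun k => hnextF (t k) k, fun k => (t k).2.1,
    fun k => hnexta (t k) k, fun k => (t k).2.2⟩

lemma exists_triangular_of_chain {N : ℕ → ℕ} {F : ℕ → Submodule ℤ (ℕ → ℤ)} (hN : StrictMono N)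
    (hF : Monotone F) (hiso : ∀ k, TruncatesIsomorphically (F k) (N k)) :
    ∃ b : ℕ → ℕ → ℤ, (∀ s m, m < s → b s m = 0) ∧ (∀ s, b s s = 1) ∧
      ∀ s k, s < N k → b s ∈ F k := by
  classical
  have hex : ∀ s, ∃ k, s < N k := fun s => ⟨s + 1, (Nat.lt_succ_self s).trans_le (hN.id_le _)⟩
  have hlift : ∀ k (z : Fin (N k) → ℤ), ∃ x ∈ F k, truncate ℤ (N k) x = z :=
    fun k z => mem_map.1 ((hiso k).2 ▸ mem_top)
  choose lift hliftF hlift using hlift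
  -- Taking the first stage that sees coordinate `s` gives `b s ∈ F k` whenever `s < N k`.
  let b s := lift (Nat.find (hex s)) (Pi.single ⟨s, Nat.find_spec (hex s)⟩ 1)
  have hb : ∀ s m, m < N (Nat.find (hex s)) → b s m = if m = s then 1 else 0 := fun s m hm => by
    have := congrFun (hlift _ (Pi.single ⟨s, Nat.find_spec (hex s)⟩ 1)) ⟨m, hm⟩
    simpa [Pi.single_apply, Fin.ext_iff] using this
  refine ⟨b, fun s m hms => ?_, fun s => ?_,
    fun s k hs => hF (Nat.find_min' (hex s) hs) (hliftF _ _)⟩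
  · rw [hb s m (hms.trans (Nat.find_spec (hex s))), if_neg hms.ne]
  · rw [hb s s (Nat.find_spec (hex s)), if_pos rfl]

lemma exists_triangular_span_eq {H : Submodule ℤ (ℕ → ℤ)} [Countable H] (hH : IsSaturated H)
    (hdense : ∀ N, H.map (truncate ℤ N) = ⊤) :
    ∃ b : ℕ → ℕ → ℤ, (∀ s m, m < s → b s m = 0) ∧ (∀ s, b s s = 1) ∧
      span ℤ (Set.range b) = H := by
  have : Nonempty H := ⟨0⟩
  obtain ⟨a, ha⟩ := exists_surjective_nat H
  obtain ⟨N, F, hN, hF, hFH, haF, hiso⟩ :=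
    exists_chain_truncatesIsomorphically hH hdense (fun k => a k) fun k => (a k).2
  obtain ⟨b, hb0, hb1, hbF⟩ := exists_triangular_of_chain hN hF hiso
  refine ⟨b, hb0, hb1, le_antisymm (span_le.2 ?_) fun x hx => ?_⟩
  · rintro _ ⟨s, rfl⟩
    exact hFH _ (hbF s (s + 1) ((Nat.lt_succ_self s).trans_le (hN.id_le _)))
  · obtain ⟨k, hk⟩ := ha ⟨x, hx⟩
    have hxF := haF k
    rw [hk] at hxF
    exact mem_span_range_of_disjoint_ker_truncate hb0 hb1 (hiso (k + 1)).1
      (fun s hs => hbF s _ hs) hxF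

/-- Chase: if `H` is a countable pure subgroup of the Baer-Specker group
`ℤ^ω` that is dense in the product topology (with `ℤ` discrete), then `ℤ^ω/H` is
isomorphic to `ℤ^ω/ℤ^(ω)`. -/
theorem statement12 (H : AddSubgroup (ℕ → ℤ)) (hcount : Countable H)
    (hpure : ∀ n : ℕ, 0 < n → ∀ h ∈ H, (∃ g : ℕ → ℤ, n • g = h) → ∃ k ∈ H, n • k = h)
    (hdense : Dense (H : Set (ℕ → ℤ))) :
    Nonempty (((ℕ → ℤ) ⧸ H) ≃+ ((ℕ → ℤ) ⧸ finSuppSubgroup)) := by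
  have : Countable H.toIntSubmodule := hcount
  obtain ⟨b, hb0, hb1, hbH⟩ := exists_triangular_span_eq (isSaturated_of_pure hpure)
    (Dense.map_truncate_eq_top (H := H.toIntSubmodule) hdense)
  refine ⟨(QuotientAddGroup.congr _ _ (triangularEquiv hb1).toAddEquiv ?_).symm⟩
  rw [map_triangularEquiv_finSuppSubgroup hb0 hb1, hbH, AddSubgroup.toIntSubmodule_toAddSubgroup]
end

section
/- Fix a prime p, and let H be the subgroup of the Baer-Specker group ℤ^ω consisting of all elements whose tails are divisible by arbitrarily large powers of p, i.e., H = {x ∈ ℤ^ω : ∀ k ∈ ℕ, ∃ N ∈ ℕ, ∀ n ≥ N, p^k ∣ x(n)}. Then H is uncountable and H is not a free abelian group (H is not free as a ℤ-module). -/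
/-!
The uncountable `Set ℕ` embeds into `H = tailDiv p` via `s ↦ (n ↦ [n ∈ s] pⁿ)`.
On the other hand `H / pH` is countable: a tail of `x ∈ H` beyond the point where `p ∣ x n`
is `p` times an element of `H`, so every class is represented by a finitely supported sequence.
In a free `ℤ`-module with basis `(bᵢ)` the classes of the `bᵢ` modulo `p` are distinct, so a
free `H` would have a countable basis and hence be countable.
-/

/-- The subgroup of the Baer-Specker group `ℤ^ω` of elements whose tails are divisible
by arbitrarily large powers of `p`. -/
def tailDiv (p : ℕ) : AddSubgroup (ℕ → ℤ) where
  carrier := {x | ∀ k : ℕ, ∃ N : ℕ, ∀ n ≥ N, (p : ℤ) ^ k ∣ x n}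
  zero_mem' := fun _ => ⟨0, fun _ _ => dvd_zero _⟩
  add_mem' := by
    intro a b ha hb k
    obtain ⟨Na, hNa⟩ := ha k
    obtain ⟨Nb, hNb⟩ := hb k
    refine ⟨max Na Nb, fun n hn => ?_⟩
    have h1 := hNa n (le_trans (le_max_left _ _) hn)
    have h2 := hNb n (le_trans (le_max_right _ _) hn)
    simpa using dvd_add h1 h2
  neg_mem' := by
    intro a ha k
    obtain ⟨N, hN⟩ := ha k
    refine ⟨N, fun n hn => ?_⟩
    simpa using (dvd_neg).mpr (hN n hn)

open scoped Pointwise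

theorem uncountable_set_nat : Uncountable (Set ℕ) := by
  rw [uncountable_iff_isEmpty_embedding]
  exact ⟨fun f => Function.cantor_injective f f.injective⟩

section FreeModule

variable {R M ι : Type*} [CommRing R] [AddCommGroup M] [Module R M]

theorem Module.Basis.injective_mk_smul_top (b : Module.Basis ι R M) {a : R} (ha : ¬IsUnit a) :
    Function.Injective fun i => (Submodule.Quotient.mk (b i) : M ⧸ a • (⊤ : Submodule R M)) := by
  intro i j hij
  by_contra hne
  obtain ⟨z, -, hz⟩ :=
    (Submodule.mem_smul_pointwise_iff_exists _ _ _).mp ((Submodule.Quotient.eq _).mp hij)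
  have hcoord := congrArg (fun w => b.repr w i) hz
  simp only [map_smul, map_sub, Module.Basis.repr_self, Finsupp.smul_apply, Finsupp.sub_apply,
    Finsupp.single_eq_same, Finsupp.single_eq_of_ne hne, smul_eq_mul, sub_zero] at hcoord
  exact ha (IsUnit.of_mul_eq_one _ hcoord)

theorem Module.Free.countable_of_countable_quotient_smul_top [Countable R] [Module.Free R M]
    {a : R} (ha : ¬IsUnit a) (hquot : Countable (M ⧸ a • (⊤ : Submodule R M))) : Countable M :=
  let b := Module.Free.chooseBasis R M
  have : Countable (Module.Free.ChooseBasisIndex R M) := (b.injective_mk_smul_top ha).countable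
  b.repr.toEquiv.countable_iff.mpr inferInstance

end FreeModule

namespace tailDiv

variable {p : ℕ}

theorem uncountable (hp : p ≠ 0) : Uncountable (tailDiv p) := by
  have := uncountable_set_nat
  let f : Set ℕ → tailDiv p := fun s =>
    ⟨s.indicator fun n => (p : ℤ) ^ n, fun k =>
      ⟨k, fun n hn => by by_cases hs : n ∈ s <;> simp [hs, pow_dvd_pow _ hn]⟩⟩
  refine Function.Injective.uncountable (f := f) fun s t hst => Set.ext fun n => ?_
  have hn := congrFun (congrArg Subtype.val hst) n
  by_cases hs : n ∈ s <;> by_cases ht : n ∈ t <;>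
    simp [f, hs, ht, hp, eq_comm (a := (0 : ℤ))] at hn ⊢

theorem finsupp_mem (y : ℕ →₀ ℤ) : ⇑y ∈ tailDiv p := by
  obtain ⟨N, hN⟩ := y.support.exists_nat_subset_range
  refine fun k => ⟨N, fun n hn => ?_⟩
  have hns : n ∉ y.support := fun h => by simpa using (Finset.mem_range.mp (hN h)).trans_le hn
  simp [Finsupp.notMem_support_iff.mp hns]

theorem exists_finsupp_add_smul {x : ℕ → ℤ} (hx : x ∈ tailDiv p) :
    ∃ y : ℕ →₀ ℤ, ∃ z ∈ tailDiv p, x = ⇑y + (p : ℤ) • z := by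
  classical
  obtain ⟨N, hN⟩ := hx 1
  let y : ℕ →₀ ℤ := Finsupp.onFinset (Finset.range N) (fun n => if n < N then x n else 0)
    fun n h => by simp only [Finset.mem_range]; by_contra hn; simp [hn] at h
  refine ⟨y, fun n => if n < N then 0 else x n / p, fun k => ?_, funext fun n => ?_⟩
  · obtain ⟨N', hN'⟩ := hx (k + 1)
    refine ⟨max N N', fun n hn => ?_⟩
    simp only [if_neg (show ¬n < N by omega)]
    exact Int.dvd_div_of_mul_dvd (by simpa [pow_succ'] using hN' n (by omega))
  · by_cases hn : n < N
    · simp [y, hn]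
    · simp [y, hn, Int.mul_ediv_cancel' (by simpa using hN n (by omega))]

theorem countable_quotient_smul_top :
    Countable (tailDiv p ⧸ (p : ℤ) • (⊤ : Submodule ℤ (tailDiv p))) := by
  refine Function.Surjective.countable
    (f := fun y : ℕ →₀ ℤ => Submodule.Quotient.mk (⟨y, finsupp_mem y⟩ : tailDiv p)) ?_
  rintro q
  obtain ⟨⟨x, hx⟩, rfl⟩ := Submodule.Quotient.mk_surjective _ q
  obtain ⟨y, z, hz, rfl⟩ := exists_finsupp_add_smul hx
  refine ⟨y, (Submodule.Quotient.eq _).mpr ?_⟩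
  refine (Submodule.mem_smul_pointwise_iff_exists _ _ _).mpr ⟨-⟨z, hz⟩, trivial, ?_⟩
  ext n
  simp

end tailDiv

/-- for a prime `p`, the subgroup of `ℤ^ω` of elements whose tails are
divisible by arbitrarily large powers of `p` is uncountable and is not a free abelian
group. -/
theorem statement14 (p : ℕ) (hp : p.Prime) :
    Uncountable (tailDiv p) ∧ ¬ Module.Free ℤ (tailDiv p) := by
  have huncountable := tailDiv.uncountable hp.ne_zero
  refine ⟨huncountable, fun _ => not_countable (α := tailDiv p) ?_⟩
  exact Module.Free.countable_of_countable_quotient_smul_top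
    (Nat.prime_iff_prime_int.mp hp).not_isUnit tailDiv.countable_quotient_smul_top
end

section
/- Let δ be the cofinality of the cardinal 2^ℵ₀. There exists a continuous increasing chain ⟨A_α : α < δ⟩ of subgroups of the Baer-Specker group ℤ^ω such that every A_α is slender and ⋃_{α<δ} A_α = ℤ^ω. -/
/-!
A subgroup `G ≤ ℤ^I` with `#G < 2^ℵ₀` is slender. Otherwise some `f : ℤ^ω → G` kills no tail:
pick `y k` vanishing below `k` with `f (y k) ≠ 0`, a coordinate `j k` where `a k := f (y k) (j k)`
is nonzero, and put `c k = ∏_{i<k} (|a i| + 1)`. Then `S ↦ f (∑_{k ∈ S} c k • y k)` is injective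
on subsets of `ℕ`: if `S`, `S'` first differ at `m`, the difference of the two images is
`c m • (± f (y m) + (|a m| + 1) • g)` for some `g`, and its `j m`-coordinate cannot vanish since
`|a m| + 1 ∤ a m`.

For the chain, enumerate `ℤ^ω` in order type `2^ℵ₀`, fix a strictly increasing cofinal sequence
`(o ζ)_{ζ < δ}` and let `A α` be generated by the elements of rank `≤ o ζ` for some `ζ < α`.
For `α < δ` these all have rank `< o α`, so `#(A α) < 2^ℵ₀`; continuity holds because at a limit
the union of the `A ζ` is directed, hence already a subgroup.
-/

open Cardinal Set Order Finset

/-- An abelian group `G` is slender if every homomorphism `ℤ^ω → G` kills all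
functions vanishing below some `n`. -/
def Slender (G : Type*) [AddCommGroup G] : Prop :=
  ∀ f : (ℕ → ℤ) →+ G, ∃ n : ℕ, ∀ x : ℕ → ℤ, (∀ i < n, x i = 0) → f x = 0

section

universe u v

theorem Int.not_abs_add_one_dvd {a : ℤ} (ha : a ≠ 0) : ¬ |a| + 1 ∣ a := fun h ↦ by
  have := Int.le_of_dvd (abs_pos.mpr ha) ((dvd_abs _ _).mpr h)
  omega

/-- The formal sum `∑ₖ e k • y k`; it is the honest pointwise sum when `y k` vanishes below `k`. -/
def seriesSum (y : ℕ → ℕ → ℤ) : (ℕ → ℤ) →+ (ℕ → ℤ) where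
  toFun e i := ∑ k ∈ range (i + 1), e k * y k i
  map_zero' := by ext; simp
  map_add' e e' := by ext; simp [add_mul, Finset.sum_add_distrib]

namespace seriesSum

variable {y : ℕ → ℕ → ℤ}

theorem single (hy : ∀ k, ∀ i < k, y k i = 0) (m : ℕ) (b : ℤ) :
    seriesSum y (Pi.single m b) = b • y m := by
  ext i
  simp only [seriesSum, AddMonoidHom.coe_mk, ZeroHom.coe_mk, Pi.single_apply, ite_mul, zero_mul,
    sum_ite_eq', Finset.mem_range, Pi.smul_apply, smul_eq_mul]
  split_ifs with hmi
  · rfl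
  · rw [hy m i (by omega), mul_zero]

theorem exists_eq_smul_add_smul (hy : ∀ k, ∀ i < k, y k i = 0) {e : ℕ → ℤ} {m : ℕ}
    (he : ∀ k < m, e k = 0) {D : ℤ} (hD : ∀ k, m < k → D ∣ e k) :
    ∃ w, seriesSum y e = e m • y m + D • w := by
  choose q hq using hD
  let q' : ℕ → ℤ := fun k ↦ if h : m < k then q k h else 0
  have he' : e = Pi.single m (e m) + D • q' := by
    ext k
    rcases lt_trichotomy k m with h | rfl | h
    · simp [he k h, h.ne, q', h.not_gt]
    · simp [q']
    · simp [h.ne', q', h, hq k h]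
  refine ⟨seriesSum y q', ?_⟩
  conv_lhs => rw [he']
  rw [map_add, map_zsmul, single hy]

theorem apply_ne_zero (hy : ∀ k, ∀ i < k, y k i = 0) {ι : Type*} {φ : (ℕ → ℤ) →+ (ι → ℤ)}
    {m : ℕ} {j : ι} (hφ : φ (y m) j ≠ 0) {e : ℕ → ℤ} (he : ∀ k < m, e k = 0) (hm : e m ≠ 0)
    (hD : ∀ k, m < k → e m * (|φ (y m) j| + 1) ∣ e k) : φ (seriesSum y e) ≠ 0 := by
  obtain ⟨w, hw⟩ := exists_eq_smul_add_smul hy he hD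
  intro h0
  have hj : e m * (φ (y m) j + (|φ (y m) j| + 1) * φ w j) = 0 := by
    have := congrFun (congrArg φ hw ▸ h0) j
    simp only [map_add, map_zsmul, Pi.add_apply, Pi.smul_apply, smul_eq_mul, Pi.zero_apply] at this
    linear_combination this
  have hdvd : |φ (y m) j| + 1 ∣ φ (y m) j :=
    ⟨-φ w j, by linear_combination (mul_eq_zero.mp hj).resolve_left hm⟩
  exact Int.not_abs_add_one_dvd hφ hdvd

end seriesSum

theorem exists_injective_comp_of_apply_ne_zero {y : ℕ → ℕ → ℤ} (hy : ∀ k, ∀ i < k, y k i = 0)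
    {ι : Type*} {φ : (ℕ → ℤ) →+ (ι → ℤ)} {j : ℕ → ι} (hφ : ∀ k, φ (y k) (j k) ≠ 0) :
    ∃ x : (ℕ → Bool) → (ℕ → ℤ), Function.Injective (φ ∘ x) := by
  let N : ℕ → ℤ := fun k ↦ |φ (y k) (j k)| + 1
  let c : ℕ → ℤ := fun k ↦ ∏ i ∈ range k, N i
  have hc0 : ∀ k, c k ≠ 0 := fun k ↦ prod_ne_zero_iff.mpr fun i _ ↦ by positivity
  have hcN : ∀ m k, m < k → c m * N m ∣ c k := fun m k hmk ↦ by
    rw [← prod_range_succ]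
    exact prod_dvd_prod_of_subset _ _ _ (range_subset_range.mpr hmk)
  let coef : (ℕ → Bool) → ℕ → ℤ := fun ε k ↦ if ε k then c k else 0
  refine ⟨fun ε ↦ seriesSum y (coef ε), fun ε ε' h ↦ ?_⟩
  by_contra hne
  have hex : ∃ m, ε m ≠ ε' m := Function.ne_iff.mp hne
  let m := Nat.find hex
  let e := coef ε - coef ε'
  have he : ∀ k < m, e k = 0 := fun k hk ↦ by simp [e, coef, not_not.mp (Nat.find_min hex hk)]
  have hem : e m = c m ∨ e m = -c m := by
    have hm : ε m ≠ ε' m := Nat.find_spec hex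
    cases hε : ε m <;> cases hε' : ε' m <;> simp [e, coef, hε, hε'] at hm ⊢
  have hdvd : ∀ k, c k ∣ e k := fun k ↦ by
    simp only [e, coef, Pi.sub_apply]
    exact dvd_sub (by split_ifs <;> simp) (by split_ifs <;> simp)
  refine seriesSum.apply_ne_zero hy (hφ m) he (by rcases hem with h | h <;> simp [h, hc0]) ?_ ?_
  · intro k hmk
    have : e m ∣ c m := by rcases hem with h | h <;> simp [h]
    exact (mul_dvd_mul_right this _).trans ((hcN m k hmk).trans (hdvd k))
  · rw [map_sub, map_sub, sub_eq_zero]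
    exact h

theorem slender_of_mk_lt {ι : Type u} (G : AddSubgroup (ι → ℤ)) (hG : #G < 2 ^ ℵ₀) :
    Slender G := by
  intro f
  by_contra! hf
  choose y hy hfy using hf
  have hj : ∀ k, ∃ j, (G.subtype.comp f) (y k) j ≠ 0 := fun k ↦
    Function.ne_iff.mp fun h ↦ hfy k (Subtype.ext h)
  choose j hj using hj
  obtain ⟨x, hx⟩ := exists_injective_comp_of_apply_ne_zero hy hj
  have hle := lift_mk_le_lift_mk_of_injective (hx.of_comp (f := G.subtype))
  exact hG.not_ge (by simpa using hle)

theorem AddSubgroup.mk_closure_le {G : Type u} [AddCommGroup G] (s : Set G) :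
    #(closure s) ≤ max #s ℵ₀ := by
  rcases s.eq_empty_or_nonempty with rfl | ⟨x, hx⟩
  · simp [AddSubgroup.closure_empty]
  have : Nonempty s := ⟨⟨x, hx⟩⟩
  have hspan : (closure s : Set G) = range (Finsupp.linearCombination ℤ ((↑) : s → G)) := by
    rw [← Submodule.span_int_eq_addSubgroupClosure, ← LinearMap.coe_range,
      Finsupp.range_linearCombination, Subtype.range_coe]
    rfl
  calc #(closure s) = #(range (Finsupp.linearCombination ℤ ((↑) : s → G))) := by
        rw [← hspan]; rfl
    _ ≤ #(s →₀ ℤ) := mk_range_le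
    _ = max #s ℵ₀ := by simp

theorem AddSubgroup.coe_closure_biUnion_Iio {G : Type*} [AddGroup G] {ι : Type*} [LinearOrder ι]
    [SuccOrder ι] (T : ι → Set G) {ξ : ι} (hξ : IsSuccLimit ξ) :
    (closure (⋃ ζ ∈ Iio ξ, T ζ) : Set G) = ⋃ ζ ∈ Iio ξ, (closure (⋃ η ∈ Iio ζ, T η) : Set G) := by
  set A : ι → AddSubgroup G := fun α ↦ closure (⋃ ζ ∈ Iio α, T ζ)
  have hA : Monotone A := fun α β h ↦ closure_mono (biUnion_subset_biUnion_left (Iio_subset_Iio h))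
  have : Nonempty (Iio ξ) := hξ.nonempty_Iio.to_subtype
  have hdir : Directed (· ≤ ·) fun ζ : Iio ξ ↦ A ζ := (hA.comp (Subtype.mono_coe _)).directed_le
  have hU : (⋃ ζ ∈ Iio ξ, (A ζ : Set G)) = ((⨆ ζ : Iio ξ, A ζ : AddSubgroup G) : Set G) := by
    rw [coe_iSup_of_directed hdir, biUnion_eq_iUnion]
  refine subset_antisymm ?_ (iUnion₂_subset fun ζ hζ ↦ hA hζ.le)
  rw [hU, SetLike.coe_subset_coe, closure_le]
  refine iUnion₂_subset fun ζ hζ ↦ ?_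
  have hζA : T ζ ⊆ A (succ ζ) :=
    (subset_biUnion_of_mem (u := T) (s := Iio (succ ζ))
      (mem_Iio.mpr (lt_succ_of_not_isMax (not_isMax_of_lt hζ)))).trans subset_closure
  exact hζA.trans <| SetLike.coe_subset_coe.mpr <|
    le_iSup (fun η : Iio ξ ↦ A η) ⟨succ ζ, hξ.succ_lt hζ⟩

theorem exists_injective_lt_ord {X : Type v} {κ : Cardinal.{u}} (hX : lift.{u} #X = lift.{v} κ) :
    ∃ r : X → Ordinal.{u}, Function.Injective r ∧ ∀ x, r x < κ.ord := by
  obtain ⟨e⟩ : Nonempty (X ≃ Iio κ.ord) := by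
    rw [← lift_mk_eq'.{v, u + 1}, Cardinal.mk_Iio_ordinal, card_ord, lift_lift]
    simpa only [lift_lift] using congrArg lift.{u + 1} hX
  exact ⟨fun x ↦ e x, Subtype.val_injective.comp e.injective, fun x ↦ (e x).2⟩

theorem lift_mk_setOf_lt_le {X : Type v} {r : X → Ordinal.{u}} (hr : Function.Injective r)
    (o : Ordinal.{u}) : lift.{u} #{x | r x < o} ≤ lift.{v} o.card := by
  have h := lift_mk_le_lift_mk_of_injective.{v, u + 1}
    (f := fun x : {x | r x < o} ↦ (⟨r x, x.2⟩ : Iio o)) fun x y hxy ↦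
      Subtype.ext (hr (congrArg Subtype.val hxy))
  rw [Cardinal.mk_Iio_ordinal, lift_lift] at h
  rw [← lift_le.{u + 1}]
  simpa only [lift_lift] using h

theorem AddSubgroup.exists_chain_lift_mk_lt {M : Type v} [AddCommGroup M] {κ : Cardinal.{u}}
    (hκ : ℵ₀ < κ) (hM : lift.{u} #M = lift.{v} κ) :
    ∃ A : Ordinal.{u} → AddSubgroup M, Monotone A ∧
      (∀ ξ, IsSuccLimit ξ → (A ξ : Set M) = ⋃ ζ ∈ Iio ξ, (A ζ : Set M)) ∧
      (∀ α < κ.ord.cof.ord, lift.{u} #(A α) < lift.{v} κ) ∧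
      ⋃ α ∈ Iio κ.ord.cof.ord, (A α : Set M) = Set.univ := by
  obtain ⟨r, hr, hrκ⟩ := exists_injective_lt_ord hM
  set δ := κ.ord.cof.ord
  obtain ⟨f, hf⟩ := Ordinal.exists_isFundamentalSeq (o := κ.ord) (a := δ) rfl
  have hδ : IsSuccLimit δ := isSuccLimit_ord <| Ordinal.aleph0_le_cof_iff.mpr <|
    Ordinal.one_lt_cof_iff.mpr (isSuccLimit_ord hκ.le)
  let T : Ordinal.{u} → Set M := fun ζ ↦ {x | ∃ h : ζ < δ, r x ≤ f ⟨ζ, h⟩}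
  let A : Ordinal.{u} → AddSubgroup M := fun α ↦ closure (⋃ ζ ∈ Iio α, T ζ)
  refine ⟨A, fun α β h ↦ closure_mono (biUnion_subset_biUnion_left (Iio_subset_Iio h)),
    fun ξ hξ ↦ coe_closure_biUnion_Iio T hξ, fun α hα ↦ ?_, ?_⟩
  · have hsub : ⋃ ζ ∈ Iio α, T ζ ⊆ {x | r x < f ⟨α, hα⟩} := by
      simp only [iUnion₂_subset_iff]
      rintro ζ hζ x ⟨hζδ, hx⟩
      exact hx.trans_lt (hf.strictMono (show (⟨ζ, hζδ⟩ : Iio δ) < ⟨α, hα⟩ from hζ))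
    calc lift #(A α) ≤ lift (max #(⋃ ζ ∈ Iio α, T ζ) ℵ₀) := lift_le.mpr (mk_closure_le _)
      _ ≤ max (lift (f ⟨α, hα⟩).1.card) ℵ₀ := by
        rw [lift_max, lift_aleph0]
        exact max_le_max_right _ ((lift_le.mpr (mk_le_mk_of_subset hsub)).trans
          (lift_mk_setOf_lt_le hr _))
      _ < lift κ := max_lt (lift_lt.mpr (lt_ord.mp (f _).2)) (by simpa using hκ)
  · refine eq_univ_of_forall fun x ↦ ?_
    obtain ⟨_, ⟨ζ, rfl⟩, hζ⟩ := hf.isCofinal_range ⟨r x, hrκ x⟩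
    exact mem_biUnion (hδ.succ_lt ζ.2) (subset_closure (mem_biUnion (lt_succ ζ.1) ⟨ζ.2, hζ⟩))

end

/-- with `δ` the cofinality of `2^ℵ₀` (viewed as an ordinal), the
Baer-Specker group `ℤ^ω` is the union of a continuous increasing chain
`⟨A_α : α < δ⟩` of slender subgroups. -/
theorem statement15 :
    ∃ A : Ordinal → AddSubgroup (ℕ → ℤ),
      (∀ α β : Ordinal, α ≤ β → β < (((2 : Cardinal) ^ Cardinal.aleph0).ord.cof).ord → A α ≤ A β) ∧
      (∀ ξ < (((2 : Cardinal) ^ Cardinal.aleph0).ord.cof).ord, Order.IsSuccLimit ξ →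
        ((A ξ : Set (ℕ → ℤ)) = ⋃ ζ ∈ Set.Iio ξ, (A ζ : Set (ℕ → ℤ)))) ∧
      (∀ α < (((2 : Cardinal) ^ Cardinal.aleph0).ord.cof).ord, Slender (A α)) ∧
      (⋃ α ∈ Set.Iio (((2 : Cardinal) ^ Cardinal.aleph0).ord.cof).ord, (A α : Set (ℕ → ℤ))) =
        Set.univ := by
  obtain ⟨A, hmono, hcont, hsmall, hcover⟩ :=
    AddSubgroup.exists_chain_lift_mk_lt (M := ℕ → ℤ) (κ := (2 : Cardinal) ^ ℵ₀) (cantor ℵ₀)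
      (by simp)
  refine ⟨A, fun α β h _ ↦ hmono h, fun ξ _ hξ ↦ hcont ξ hξ, fun α hα ↦ ?_, hcover⟩
  exact slender_of_mk_lt _ (by simpa using hsmall α hα)
end
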